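/- arXiv:2107.07819 — 5 statements merged into one kernel-verified Lean document; each statement's English description precedes it below -/
import Mathlib

section
/- Let A be a complex *-algebra that is algebraic and whose involution is proper. Then A is hermitian and semisimple. -/
/-- A (possibly non-unital) complex algebra is *algebraic* if every element generates a
finite-dimensional subalgebra (equivalently, every element is a root of a nonzero
polynomial with complex coefficients). -/
def IsAlgebraicAlgebra (A : Type*) [NonUnitalRing A] [Module ℂ A] : Prop :=
  ∀ a : A, ∃ S : NonUnitalSubalgebra ℂ A, a ∈ S ∧ FiniteDimensional ℂ S

/-- A pre-C*-norm on a complex `*`-algebra: a submultiplicative norm `σ` with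
`σ (x* x) = σ x ^ 2`. -/
def HasPreCstarNorm (A : Type*) [NonUnitalRing A] [Module ℂ A] [Star A] : Prop :=
  ∃ σ : A → ℝ,
    (∀ a : A, σ a = 0 ↔ a = 0) ∧
    (∀ (c : ℂ) (a : A), σ (c • a) = ‖c‖ * σ a) ∧
    (∀ a b : A, σ (a + b) ≤ σ a + σ b) ∧
    (∀ a b : A, σ (a * b) ≤ σ a * σ b) ∧
    (∀ a : A, σ (star a * a) = σ a ^ 2)

/-- The involution is proper if `a* a = 0` implies `a = 0`. -/
def HasProperInvolution (A : Type*) [NonUnitalRing A] [Star A] : Prop :=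
  ∀ a : A, star a * a = 0 → a = 0

/-- Hermitian: every selfadjoint element has real spectrum (computed in the
unitization `ℂ ⊕ A`). -/
def IsHermitianStarAlgebra (A : Type*) [NonUnitalRing A] [Module ℂ A]
    [SMulCommClass ℂ A A] [IsScalarTower ℂ A A] [Star A] : Prop :=
  ∀ a : A, star a = a → ∀ z ∈ spectrum ℂ (a : Unitization ℂ A), z.im = 0

/-- Semisimple: the Jacobson radical is `{0}` (expressed via the unitization, whose
Jacobson radical meets `A` exactly in the Jacobson radical of `A`). -/
def IsSemisimpleAlgebra (A : Type*) [NonUnitalRing A] [Module ℂ A]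
    [SMulCommClass ℂ A A] [IsScalarTower ℂ A A] : Prop :=
  ∀ a : A, (a : Unitization ℂ A) ∈ (⊥ : Ideal (Unitization ℂ A)).jacobson → a = 0


/-! The involution extends to a proper involution of the unitization `ℂ ⊕ A`, in which every
element of `A` is integral over `ℂ`. For integral `a`, a spectral value `z` is a root of the
minimal polynomial `(X - z) q`, so `y = q(a) ≠ 0` is an eigenvector; if `a` is selfadjoint,
computing `y* a y` in two ways gives `(z - z̄) y* y = 0`, and properness forces `z` real.
An integral element `b` of the Jacobson radical is nilpotent: its minimal polynomial is
`X^k q` with `q(0) ≠ 0`, and `q(b) ∈ q(0) + J` is a unit. For `b = a* a`, properness turns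
nilpotency of the selfadjoint `b` into `b = 0`, and then `a = 0`. -/

open Polynomial

theorem exists_mul_one_add_eq_one_of_mem_jacobson_bot {R : Type*} [Ring R] {x : R}
    (hx : x ∈ (⊥ : Ideal R).jacobson) : ∃ u, u * (1 + x) = 1 := by
  obtain ⟨u, hu⟩ := Ideal.exists_mul_add_sub_mem_of_mem_jacobson x hx
  rw [Ideal.mem_bot, sub_eq_zero] at hu
  exact ⟨u, by rwa [add_comm]⟩

theorem isUnit_one_add_of_mem_jacobson_bot {R : Type*} [Ring R] {x : R}
    (hx : x ∈ (⊥ : Ideal R).jacobson) : IsUnit (1 + x) := by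
  obtain ⟨u, hu⟩ := exists_mul_one_add_eq_one_of_mem_jacobson_bot hx
  -- `u = 1 - u x` again has the form `1 + j` with `j` in the radical, so it has a left inverse
  have hu' : u = 1 + -(u * x) := by
    calc u = u * (1 + x) + -(u * x) := by noncomm_ring
      _ = 1 + -(u * x) := by rw [hu]
  obtain ⟨v, hv⟩ := exists_mul_one_add_eq_one_of_mem_jacobson_bot
    (neg_mem (Ideal.mul_mem_left _ u hx))
  rw [← hu'] at hv
  have hvx : v = 1 + x := left_inv_eq_right_inv hv hu
  exact ⟨⟨1 + x, u, hvx ▸ hv, hu⟩, rfl⟩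

section Algebra

variable {K B : Type*} [Field K] [Ring B] [Algebra K B]

theorem isUnit_aeval_of_mem_jacobson_bot {b : B} (hb : b ∈ (⊥ : Ideal B).jacobson) {q : K[X]}
    (hq : q.coeff 0 ≠ 0) : IsUnit (aeval b q) := by
  obtain ⟨r, hr⟩ := X_dvd_sub_C (p := q)
  have hqb : aeval b q = algebraMap K B (q.coeff 0) + aeval b r * b := by
    rw [← sub_eq_iff_eq_add', ← aeval_C b, ← map_sub, hr, mul_comm, map_mul, aeval_X]
  have hmem : algebraMap K B (q.coeff 0)⁻¹ * (aeval b r * b) ∈ (⊥ : Ideal B).jacobson :=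
    Ideal.mul_mem_left _ _ (Ideal.mul_mem_left _ _ hb)
  convert (hq.isUnit.map (algebraMap K B)).mul (isUnit_one_add_of_mem_jacobson_bot hmem) using 1
  rw [hqb, mul_add, mul_one, ← mul_assoc, ← map_mul, mul_inv_cancel₀ hq, map_one, one_mul]

theorem IsIntegral.isNilpotent_of_mem_jacobson_bot {b : B} (hint : IsIntegral K b)
    (hb : b ∈ (⊥ : Ideal B).jacobson) : IsNilpotent b := by
  obtain ⟨q, hpq, hXq⟩ := (minpoly K b).exists_eq_pow_rootMultiplicity_mul_and_not_dvd
    (minpoly.ne_zero hint) 0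
  rw [C_0, sub_zero, X_dvd_iff] at hXq
  have hzero := minpoly.aeval K b
  rw [hpq, map_mul, map_pow, map_sub, aeval_X, aeval_C, map_zero, sub_zero,
    (isUnit_aeval_of_mem_jacobson_bot hb hXq).mul_left_eq_zero] at hzero
  exact ⟨_, hzero⟩

theorem IsIntegral.exists_mul_eq_smul_of_mem_spectrum [Nontrivial B] {a : B}
    (hint : IsIntegral K a) {z : K} (hz : z ∈ spectrum K a) : ∃ y ≠ 0, a * y = z • y := by
  have hroot : (minpoly K a).IsRoot z := by
    simpa [minpoly.aeval] using spectrum.subset_polynomial_aeval a (minpoly K a) ⟨z, hz, rfl⟩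
  set q := minpoly K a /ₘ (X - C z)
  have hfac : (X - C z) * q = minpoly K a := mul_divByMonic_eq_iff_isRoot.mpr hroot
  refine ⟨aeval a q, minpoly.aeval_ne_zero_of_dvdNotUnit_minpoly hint ?_ ?_, ?_⟩
  · exact (monic_X_sub_C z).of_mul_monic_left (hfac ▸ minpoly.monic hint)
  · refine ⟨fun hq0 => minpoly.ne_zero hint ?_, X - C z, not_isUnit_X_sub_C z, ?_⟩
    · rw [← hfac, hq0, mul_zero]
    · rw [← hfac, mul_comm]
  · have := congrArg (aeval a) hfac
    rw [map_mul, map_sub, aeval_X, aeval_C, minpoly.aeval, sub_mul, sub_eq_zero,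
      ← Algebra.smul_def] at this
    exact this

end Algebra

theorem IsAlgebraicAlgebra.isIntegral_inr {A : Type*} [NonUnitalRing A] [Module ℂ A]
    [SMulCommClass ℂ A A] [IsScalarTower ℂ A A] (halg : IsAlgebraicAlgebra A) (a : A) :
    IsIntegral ℂ (a : Unitization ℂ A) := by
  obtain ⟨S, haS, hS⟩ := halg a
  have : Module.Finite ℂ (Unitization ℂ S) :=
    Module.Finite.equiv (Unitization.linearEquiv ℂ ℂ S).symm
  let φ : Unitization ℂ S →ₐ[ℂ] Unitization ℂ A := Unitization.lift
    ((Unitization.inrNonUnitalAlgHom ℂ A).comp (NonUnitalSubalgebraClass.subtype S))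
  simpa [φ] using (IsIntegral.of_finite ℂ ((⟨a, haS⟩ : S) : Unitization ℂ S)).map φ

namespace HasProperInvolution

theorem unitization {R A : Type*} [CommRing R] [StarRing R] [NoZeroDivisors R] [NonUnitalRing A]
    [StarRing A] [Module R A] [SMulCommClass R A A] [IsScalarTower R A A] [StarModule R A]
    (h : HasProperInvolution A) : HasProperInvolution (Unitization R A) := by
  intro x hx
  have hfst : x.fst = 0 := by
    simpa using congrArg (fun x : Unitization R A => x.fst) hx
  lift x to A using hfst
  rw [← Unitization.inr_star, ← Unitization.inr_mul, ← Unitization.inr_zero R,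
    Unitization.inr_inj] at hx
  rw [h x hx, Unitization.inr_zero]

theorem eq_zero_of_isNilpotent {R : Type*} [Ring R] [StarRing R] (h : HasProperInvolution R)
    {b : R} (hb : IsSelfAdjoint b) (hnil : IsNilpotent b) : b = 0 := by
  -- `b ^ 2 ^ (k + 1) = star (b ^ 2 ^ k) * b ^ 2 ^ k`, so properness halves the exponent
  have key : ∀ k, b ^ 2 ^ k = 0 → b = 0 := by
    intro k
    induction k with
    | zero => simp
    | succ k ih =>
      intro hk
      refine ih (h _ ?_)
      rwa [star_pow, hb.star_eq, ← pow_add, ← two_mul, ← pow_succ']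
  obtain ⟨n, hn⟩ := hnil
  exact key n (pow_eq_zero_of_le Nat.lt_two_pow_self.le hn)

theorem im_eq_zero_of_mul_eq_smul {B : Type*} [NonUnitalRing B] [StarRing B] [Module ℂ B]
    [SMulCommClass ℂ B B] [IsScalarTower ℂ B B] [StarModule ℂ B] (h : HasProperInvolution B)
    {a : B} (ha : IsSelfAdjoint a) {y : B} (hy : y ≠ 0) {z : ℂ} (hay : a * y = z • y) :
    z.im = 0 := by
  have hya : star y * a = star z • star y := by
    rw [← ha.star_eq, ← star_mul, hay, star_smul]
  have hsmul : (z - star z) • (star y * y) = 0 := by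
    rw [sub_smul, sub_eq_zero, ← mul_smul_comm, ← hay, ← smul_mul_assoc, ← hya, mul_assoc]
  rcases smul_eq_zero.mp hsmul with hz | hyy
  · exact Complex.conj_eq_iff_im.mp (sub_eq_zero.mp hz).symm
  · exact absurd (h y hyy) hy

theorem eq_zero_of_mem_jacobson_bot {K B : Type*} [Field K] [Ring B] [StarRing B] [Algebra K B]
    (h : HasProperInvolution B) {x : B} (hint : IsIntegral K (star x * x))
    (hx : x ∈ (⊥ : Ideal B).jacobson) : x = 0 :=
  h x <| h.eq_zero_of_isNilpotent (.star_mul_self x) <|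
    hint.isNilpotent_of_mem_jacobson_bot (Ideal.mul_mem_left _ _ hx)

end HasProperInvolution

/-- An algebraic complex `*`-algebra with proper involution is hermitian
and semisimple. -/
theorem hermitian_and_semisimple_of_properInvolution (A : Type*) [NonUnitalRing A]
    [Module ℂ A] [SMulCommClass ℂ A A] [IsScalarTower ℂ A A] [StarRing A] [StarModule ℂ A]
    (halg : IsAlgebraicAlgebra A) (hproper : HasProperInvolution A) :
    IsHermitianStarAlgebra A ∧ IsSemisimpleAlgebra A := by
  have hB : HasProperInvolution (Unitization ℂ A) := hproper.unitization
  have hint := halg.isIntegral_inr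
  refine ⟨fun a ha z hz => ?_, fun a ha => ?_⟩
  · obtain ⟨y, hy, hay⟩ := (hint a).exists_mul_eq_smul_of_mem_spectrum hz
    exact hB.im_eq_zero_of_mul_eq_smul (IsSelfAdjoint.inr ℂ ha) hy hay
  · have hx := hB.eq_zero_of_mem_jacobson_bot (by simpa using hint (star a * a)) ha
    exact Unitization.inr_injective hx
end

section
/- Let A be a complex *-algebra that is algebraic and admits a pre-C*-norm. Then every nonzero selfadjoint element b of A can be written as a finite sum b = Σ_{j∈J} λ_j e_j, where the λ_j are finitely many distinct nonzero real numbers and the e_j are nonzero pairwise orthogonal projections in A. -/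
/-- `b` is a finite real-linear combination `b = ∑ j, λ j • e j` of nonzero pairwise
orthogonal projections `e j` with distinct nonzero real coefficients `λ j`. -/
def HasSpectralDecomposition {A : Type*} [NonUnitalRing A] [Module ℂ A] [Star A]
    (b : A) : Prop :=
  ∃ (n : ℕ) (lam : Fin n → ℝ) (e : Fin n → A),
    Function.Injective lam ∧ (∀ j, lam j ≠ 0) ∧ (∀ j, e j ≠ 0) ∧
    (∀ j, star (e j) = e j ∧ e j * e j = e j) ∧
    (∀ j k, j ≠ k → e j * e k = 0) ∧
    b = ∑ j, (lam j : ℂ) • e j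

theorem HasPreCstarNorm.hasProperInvolution {A : Type*} [NonUnitalRing A] [Module ℂ A] [Star A]
    (h : HasPreCstarNorm A) : HasProperInvolution A := by
  obtain ⟨σ, hσ0, -, -, -, hσstar⟩ := h
  intro a ha
  rw [← hσ0, ← sq_eq_zero_iff, ← hσstar, ha, hσ0]

theorem Complex.hasProperInvolution : HasProperInvolution ℂ := fun z hz => by
  simpa using hz

theorem HasProperInvolution.unitization_s2 {R A : Type*} [CommRing R] [StarRing R]
    [NonUnitalRing A] [Module R A] [SMulCommClass R A A] [IsScalarTower R A A] [StarRing A]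
    [StarModule R A] (hR : HasProperInvolution R) (hA : HasProperInvolution A) :
    HasProperInvolution (Unitization R A) := by
  intro x hx
  have hfst : x.fst = 0 := hR _ (by simpa using congrArg (·.fst) hx)
  have hx' : x = x.snd := by
    rw [← Unitization.inl_fst_add_inr_snd_eq x, hfst]; simp
  rw [hx', ← Unitization.inr_star, ← Unitization.inr_mul] at hx
  rw [hx', hA x.snd (Unitization.inr_injective (R := R) (by simpa using hx)), Unitization.inr_zero]

section
variable {R : Type*} [Ring R] [StarRing R]

theorem IsSelfAdjoint.eq_zero_of_pow_two_pow_eq_zero (hR : HasProperInvolution R) (k : ℕ) :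
    ∀ {x : R}, IsSelfAdjoint x → x ^ 2 ^ k = 0 → x = 0 := by
  induction k with
  | zero => simp
  | succ k ih =>
    intro x hx hxk
    have hsq : x ^ 2 = 0 := ih (hx.pow 2) (by rwa [← pow_mul, ← pow_succ'])
    exact hR x (by rwa [hx.star_eq, ← sq])

theorem IsSelfAdjoint.eq_zero_of_isNilpotent (hR : HasProperInvolution R) {x : R}
    (hx : IsSelfAdjoint x) (hnil : IsNilpotent x) : x = 0 := by
  obtain ⟨n, hn⟩ := hnil
  exact hx.eq_zero_of_pow_two_pow_eq_zero hR n (pow_eq_zero_of_le n.lt_two_pow_self.le hn)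

theorem IsStarNormal.eq_zero_of_isNilpotent (hR : HasProperInvolution R) {x : R}
    [hx : IsStarNormal x] (hnil : IsNilpotent x) : x = 0 :=
  hR x <| (IsSelfAdjoint.star_mul_self x).eq_zero_of_isNilpotent hR
    (hx.star_comm_self.isNilpotent_mul_left hnil)
end

theorem Unitization.isIntegral_inr_of_mem {R A : Type*} [CommRing R] [NonUnitalRing A]
    [Module R A] [SMulCommClass R A A] [IsScalarTower R A A]
    {S : NonUnitalSubalgebra R A} [Module.Finite R S] {a : A} (ha : a ∈ S) :
    IsIntegral R (a : Unitization R A) := by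
  have : Module.Finite R (Unitization R S) :=
    Module.Finite.equiv (Unitization.linearEquiv R R S).symm
  simpa using (Algebra.IsIntegral.isIntegral (R := R) ((⟨a, ha⟩ : S) : Unitization R S)).map
    (Unitization.lift ((Unitization.inrNonUnitalAlgHom R A).comp
      (NonUnitalSubalgebraClass.subtype S)))

open Polynomial

theorem aeval_ne_zero_of_mem_roots {K R : Type*} [Field K] [Ring R] [Algebra K R] {u : R}
    {p : K[X]} {z : K} (hz : z ∈ (minpoly K u).roots) (hpz : p.eval z ≠ 0) : aeval u p ≠ 0 :=
  fun h => hpz <| by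
    obtain ⟨t, rfl⟩ := minpoly.dvd K u h
    rw [eval_mul, (isRoot_of_mem_roots hz).eq_zero, zero_mul]

theorem Lagrange.eval_basis_id {K : Type*} [Field K] [DecidableEq K] {s : Finset K} {x y : K}
    (hx : x ∈ s) (hy : y ∈ s) : (Lagrange.basis s id x).eval y = if x = y then 1 else 0 := by
  split_ifs with h
  · subst h; exact Lagrange.eval_basis_self (Set.injOn_id _) hx
  · exact Lagrange.eval_basis_of_ne (v := id) h hy

section
variable {R : Type*} [Ring R] [StarRing R] [Algebra ℂ R] [StarModule ℂ R]

theorem star_aeval (u : R) (p : ℂ[X]) :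
    star (aeval u p) = aeval (star u) (p.map (starRingEnd ℂ)) := by
  induction p using Polynomial.induction_on' with
  | add p q hp hq => simp only [map_add, star_add, hp, hq, Polynomial.map_add]
  | monomial n a =>
    rw [aeval_monomial, Polynomial.map_monomial, aeval_monomial, star_mul, star_pow,
      ← algebraMap_star_comm, Complex.star_def]
    exact (Algebra.commutes _ _).symm

namespace IsSelfAdjoint

theorem aeval_eq_zero_of_forall_mem_roots (hR : HasProperInvolution R) {u : R}
    (hu : IsSelfAdjoint u) (hint : IsIntegral ℂ u) {p : ℂ[X]}
    (hp : ∀ z ∈ (minpoly ℂ u).roots, p.eval z = 0) : aeval u p = 0 := by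
  have hdvd : minpoly ℂ u ∣ p ^ Multiset.card (minpoly ℂ u).roots := by
    conv_lhs => rw [(IsAlgClosed.splits _).eq_prod_roots_of_monic (minpoly.monic hint)]
    rw [← Multiset.prod_replicate, ← Multiset.map_const']
    exact Multiset.prod_dvd_prod_of_dvd _ _ fun z hz => dvd_iff_isRoot.mpr (hp z hz)
  have hnil : IsNilpotent (aeval u p) := by
    obtain ⟨t, ht⟩ := hdvd
    exact ⟨_, by rw [← map_pow, ht, map_mul, minpoly.aeval, zero_mul]⟩
  have : IsStarNormal (aeval u p) :=
    ⟨by rw [star_aeval, hu.star_eq]; exact (Commute.all _ _).map (aeval u)⟩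
  exact IsStarNormal.eq_zero_of_isNilpotent hR hnil

theorem aeval_eq_aeval_of_forall_mem_roots (hR : HasProperInvolution R) {u : R}
    (hu : IsSelfAdjoint u) (hint : IsIntegral ℂ u) {p q : ℂ[X]}
    (hpq : ∀ z ∈ (minpoly ℂ u).roots, p.eval z = q.eval z) : aeval u p = aeval u q :=
  sub_eq_zero.mp <| by
    rw [← map_sub]
    exact hu.aeval_eq_zero_of_forall_mem_roots hR hint fun z hz => by
      rw [eval_sub, hpq z hz, sub_self]

theorem conj_eq_of_mem_roots (hR : HasProperInvolution R) {u : R}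
    (hu : IsSelfAdjoint u) (hint : IsIntegral ℂ u) {ν : ℂ} (hν : ν ∈ (minpoly ℂ u).roots) :
    starRingEnd ℂ ν = ν := by
  classical
  set Λ := (minpoly ℂ u).roots.toFinset
  have hνΛ : ν ∈ Λ := Multiset.mem_toFinset.mpr hν
  set e := aeval u (Lagrange.basis Λ id ν)
  have he : e ≠ 0 := aeval_ne_zero_of_mem_roots hν (by simp [Lagrange.eval_basis_id hνΛ hνΛ])
  have hue : u * e = ν • e := by
    have := hu.aeval_eq_aeval_of_forall_mem_roots hR hint
      (p := X * Lagrange.basis Λ id ν) (q := C ν * Lagrange.basis Λ id ν) fun z hz => by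
        rw [eval_mul, eval_mul, eval_X, eval_C,
          Lagrange.eval_basis_id hνΛ (Multiset.mem_toFinset.mpr hz)]
        split_ifs with h <;> simp [h]
    rwa [map_mul, map_mul, aeval_X, aeval_C, ← Algebra.smul_def] at this
  have hsue : star e * u = starRingEnd ℂ ν • star e := by
    simpa [hu.star_eq] using congrArg star hue
  have : (ν - starRingEnd ℂ ν) • (star e * e) = 0 := by
    rw [sub_smul, ← mul_smul_comm, ← hue, ← smul_mul_assoc, ← hsue, mul_assoc, sub_self]
  have hee : star e * e ≠ 0 := fun h => he (hR e h)
  exact (sub_eq_zero.mp ((smul_eq_zero.mp this).resolve_right hee)).symm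

theorem isSelfAdjoint_aeval (hR : HasProperInvolution R) {u : R}
    (hu : IsSelfAdjoint u) (hint : IsIntegral ℂ u) {p : ℂ[X]}
    (hp : ∀ z ∈ (minpoly ℂ u).roots, starRingEnd ℂ (p.eval z) = p.eval z) :
    IsSelfAdjoint (aeval u p) := by
  rw [IsSelfAdjoint, star_aeval, hu.star_eq]
  refine hu.aeval_eq_aeval_of_forall_mem_roots hR hint fun z hz => ?_
  calc (p.map (starRingEnd ℂ)).eval z = (p.map (starRingEnd ℂ)).eval (starRingEnd ℂ z) := by
        rw [hu.conj_eq_of_mem_roots hR hint hz]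
    _ = starRingEnd ℂ (p.eval z) := by rw [eval_map, eval₂_at_apply]
    _ = p.eval z := hp z hz

theorem exists_eq_sum_smul_projections (hR : HasProperInvolution R) {u : R}
    (hu : IsSelfAdjoint u) (hint : IsIntegral ℂ u) :
    ∃ (s : Finset ℝ) (e : ℝ → R),
      (∀ r ∈ s, e r ≠ 0 ∧ IsSelfAdjoint (e r) ∧ IsIdempotentElem (e r)) ∧
      (∀ r ∈ s, ∀ r' ∈ s, r ≠ r' → e r * e r' = 0) ∧ u = ∑ r ∈ s, (r : ℂ) • e r := by
  classical
  set Λ := (minpoly ℂ u).roots.toFinset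
  have hreal : Set.EqOn (Complex.ofReal ∘ Complex.re) id Λ := fun z hz =>
    Complex.conj_eq_iff_re.mp (hu.conj_eq_of_mem_roots hR hint (Multiset.mem_toFinset.mp hz))
  obtain ⟨s, hs⟩ : ∃ s : Finset ℝ, Λ = s.image (↑) := ⟨Λ.image Complex.re, by
    rw [Finset.image_image, Finset.image_congr hreal, Finset.image_id]⟩
  have hmem : ∀ r ∈ s, (r : ℂ) ∈ Λ := fun r hr => hs ▸ Finset.mem_image_of_mem _ hr
  set e : ℝ → R := fun r => aeval u (Lagrange.basis Λ id (r : ℂ))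
  have hval : ∀ r ∈ s, ∀ z ∈ (minpoly ℂ u).roots,
      (Lagrange.basis Λ id (r : ℂ)).eval z = if (r : ℂ) = z then 1 else 0 := fun r hr z hz =>
    Lagrange.eval_basis_id (hmem r hr) (Multiset.mem_toFinset.mpr hz)
  refine ⟨s, e, fun r hr => ⟨?_, ?_, ?_⟩, fun r hr r' hr' hrr' => ?_, ?_⟩
  · exact aeval_ne_zero_of_mem_roots (Multiset.mem_toFinset.mp (hmem r hr))
      (by simp [hval r hr _ (Multiset.mem_toFinset.mp (hmem r hr))])
  · exact hu.isSelfAdjoint_aeval hR hint fun z hz => by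
      rw [hval r hr z hz]; split_ifs <;> simp
  · show aeval u _ * aeval u _ = aeval u _
    rw [← map_mul]
    exact hu.aeval_eq_aeval_of_forall_mem_roots hR hint fun z hz => by
      rw [eval_mul, hval r hr z hz]; split_ifs <;> simp
  · show aeval u _ * aeval u _ = 0
    rw [← map_mul]
    exact hu.aeval_eq_zero_of_forall_mem_roots hR hint fun z hz => by
      rw [eval_mul, hval r hr z hz, hval r' hr' z hz]
      by_cases h : (r : ℂ) = z
      · have h' : (r' : ℂ) ≠ z := fun h' => hrr' (Complex.ofReal_injective (h.trans h'.symm))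
        simp [h, h']
      · simp [h]
  · calc u = aeval u X := (aeval_X u).symm
      _ = aeval u (Lagrange.interpolate Λ id id) :=
        hu.aeval_eq_aeval_of_forall_mem_roots hR hint fun z hz => by
          simpa using (Lagrange.eval_interpolate_at_node id (Set.injOn_id _)
            (Multiset.mem_toFinset.mpr hz)).symm
      _ = ∑ ν ∈ Λ, ν • aeval u (Lagrange.basis Λ id ν) := by
        simp [Lagrange.interpolate_apply, Algebra.smul_def]
      _ = ∑ r ∈ s, (r : ℂ) • e r := by
        have := Finset.sum_image (s := s) Complex.ofReal_injective.injOn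
          (f := fun ν => ν • aeval u (Lagrange.basis Λ id ν))
        rwa [← hs] at this

end IsSelfAdjoint
end

theorem HasSpectralDecomposition.of_eq_sum {A : Type*} [NonUnitalRing A] [Module ℂ A] [Star A]
    {b : A} (s : Finset ℝ) (e : ℝ → A) (hs : 0 ∉ s)
    (he : ∀ r ∈ s, e r ≠ 0 ∧ IsSelfAdjoint (e r) ∧ IsIdempotentElem (e r))
    (horth : ∀ r ∈ s, ∀ r' ∈ s, r ≠ r' → e r * e r' = 0) (hb : b = ∑ r ∈ s, (r : ℂ) • e r) :
    HasSpectralDecomposition b := by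
  let lam : Fin s.card → ℝ := fun j => s.equivFin.symm j
  have hlam : ∀ j, lam j ∈ s := fun j => (s.equivFin.symm j).2
  have hinj : Function.Injective lam := Subtype.val_injective.comp s.equivFin.symm.injective
  refine ⟨s.card, lam, e ∘ lam, hinj, fun j h => hs (h ▸ hlam j), fun j => (he _ (hlam j)).1,
    fun j => (he _ (hlam j)).2, fun j k hjk => horth _ (hlam j) _ (hlam k) (hinj.ne hjk), ?_⟩
  rw [hb, ← Finset.sum_coe_sort s]
  exact (Equiv.sum_comp s.equivFin.symm fun r => ((r : ℝ) : ℂ) • e r).symm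

theorem HasSpectralDecomposition.of_inr_eq_sum {A : Type*} [NonUnitalRing A] [Module ℂ A]
    [SMulCommClass ℂ A A] [IsScalarTower ℂ A A] [StarRing A] [StarModule ℂ A] {b : A}
    (s : Finset ℝ) (e : ℝ → Unitization ℂ A)
    (he : ∀ r ∈ s, e r ≠ 0 ∧ IsSelfAdjoint (e r) ∧ IsIdempotentElem (e r))
    (horth : ∀ r ∈ s, ∀ r' ∈ s, r ≠ r' → e r * e r' = 0)
    (hb : (b : Unitization ℂ A) = ∑ r ∈ s, (r : ℂ) • e r) :
    HasSpectralDecomposition b := by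
  classical
  have hinr : ∀ r ∈ s.erase 0, ((e r).snd : Unitization ℂ A) = e r := by
    intro r hr
    obtain ⟨hr0, hr⟩ := Finset.mem_erase.mp hr
    have hbe : (b : Unitization ℂ A) * e r = (r : ℂ) • e r := by
      rw [hb, Finset.sum_mul, Finset.sum_eq_single_of_mem r hr fun r' hr' hne => by
        rw [smul_mul_assoc, horth r' hr' r hr hne, smul_zero], smul_mul_assoc, (he r hr).2.2.eq]
    have hfst : (e r).fst = 0 := by
      simpa [hr0] using (congrArg (·.fst) hbe).symm
    rw [← Unitization.inl_fst_add_inr_snd_eq (e r), hfst, Unitization.inl_zero, zero_add,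
      Unitization.snd_inr]
  refine HasSpectralDecomposition.of_eq_sum (s.erase 0) (fun r => (e r).snd)
    (Finset.notMem_erase 0 s) (fun r hr => ?_) (fun r hr r' hr' hrr' => ?_) ?_
  · have he' := he r (Finset.mem_of_mem_erase hr)
    refine ⟨fun h => he'.1 ?_, Unitization.inr_injective (R := ℂ) ?_,
      Unitization.inr_injective (R := ℂ) ?_⟩
    · rw [← hinr r hr, h, Unitization.inr_zero]
    · rw [Unitization.inr_star, hinr r hr, he'.2.1.star_eq]
    · rw [Unitization.inr_mul, hinr r hr, he'.2.2.eq]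
  · refine Unitization.inr_injective (R := ℂ) ?_
    rw [Unitization.inr_mul, hinr r hr, hinr r' hr', Unitization.inr_zero,
      horth r (Finset.mem_of_mem_erase hr) r' (Finset.mem_of_mem_erase hr') hrr']
  · refine Unitization.inr_injective (R := ℂ) ?_
    rw [hb, ← Finset.sum_erase s (a := 0) (by simp)]
    refine .trans (Finset.sum_congr rfl fun r hr => ?_)
      (map_sum (Unitization.inrNonUnitalAlgHom ℂ A) _ _).symm
    change _ = (((r : ℂ) • (e r).snd : A) : Unitization ℂ A)
    rw [Unitization.inr_smul, hinr r hr]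

/-- In an algebraic complex `*`-algebra with a pre-C*-norm, every nonzero
selfadjoint element is a finite linear combination of nonzero pairwise orthogonal
projections with distinct nonzero real coefficients. -/
theorem spectralDecomposition_of_preCstarNorm (A : Type*) [NonUnitalRing A] [Module ℂ A]
    [SMulCommClass ℂ A A] [IsScalarTower ℂ A A] [StarRing A] [StarModule ℂ A]
    (halg : IsAlgebraicAlgebra A) (hnorm : HasPreCstarNorm A) :
    ∀ b : A, star b = b → b ≠ 0 → HasSpectralDecomposition b := by
  intro b hb _
  obtain ⟨S, hbS, hS⟩ := halg b
  have hproper : HasProperInvolution (Unitization ℂ A) :=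
    Complex.hasProperInvolution.unitization_s2 hnorm.hasProperInvolution
  have hu : IsSelfAdjoint (b : Unitization ℂ A) := by
    rw [IsSelfAdjoint, ← Unitization.inr_star, hb]
  obtain ⟨s, e, he, horth, hsum⟩ :=
    hu.exists_eq_sum_smul_projections hproper (Unitization.isIntegral_inr_of_mem hbS)
  exact .of_inr_eq_sum s e he horth hsum
end

section
/- Let A be a complex *-algebra that is algebraic, and suppose every nonzero selfadjoint element b of A can be written as a finite sum b = Σ_{j∈J} λ_j e_j with finitely many distinct nonzero real numbers λ_j and nonzero pairwise orthogonal projections e_j in A. Then A is hermitian and semisimple. -/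
/-! In the unitization, a selfadjoint `b = ∑ λⱼ eⱼ` has `z - b` invertible, with inverse
`z⁻¹ + ∑ dⱼ eⱼ`, for every `z ∉ {0} ∪ {λⱼ}`; so `b` has real spectrum and `b²` nonnegative
spectrum. For `b ≠ 0`, any `e = eⱼ` is a nonzero idempotent with `e b = λ e`, `λ ≠ 0`; this
rules out `b² = 0`. If `a* a = 0`, then also `a a* = 0`, and with `h = a + a*` and
`k = i (a - a*)` one gets `k² = -h²`, so `e` would put `-λ²` in the spectrum of `k²`:
hence `h = k = 0` and `a = 0`.
If `a` lies in the Jacobson radical, so does `a* a`, and then so does the idempotent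
`e = λ⁻¹ e a* a`, which is therefore `0`; hence `a* a = 0` and `a = 0`. -/

namespace OrthogonalIdempotents

variable {𝕜 R ι : Type*} [Field 𝕜] [Ring R] [Algebra 𝕜 R] [Fintype ι] {e : ι → R}

lemma mul_sum_smul (he : OrthogonalIdempotents e) (j : ι) (c : ι → 𝕜) :
    e j * ∑ k, c k • e k = c j • e j := by
  classical
  simp only [Finset.mul_sum, mul_smul_comm, he.mul_eq, smul_ite, smul_zero, Finset.sum_ite_eq,
    Finset.mem_univ, if_true]

lemma sum_smul_mul_sum_smul (he : OrthogonalIdempotents e) (c d : ι → 𝕜) :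
    (∑ j, c j • e j) * ∑ k, d k • e k = ∑ j, (c j * d j) • e j := by
  simp only [Finset.sum_mul, smul_mul_assoc, he.mul_sum_smul, smul_smul]

lemma algebraMap_add_sum_smul_mul (he : OrthogonalIdempotents e) (a b : 𝕜) (c d : ι → 𝕜) :
    (algebraMap 𝕜 R a + ∑ j, c j • e j) * (algebraMap 𝕜 R b + ∑ j, d j • e j) =
      algebraMap 𝕜 R (a * b) + ∑ j, (a * d j + c j * b + c j * d j) • e j := by
  simp only [Algebra.algebraMap_eq_smul_one, add_mul, mul_add, smul_mul_assoc, mul_smul_comm,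
    one_mul, mul_one, he.sum_smul_mul_sum_smul, Finset.smul_sum, smul_smul, add_smul,
    Finset.sum_add_distrib, smul_add, mul_comm b]
  abel

lemma isUnit_algebraMap_add_sum_smul (he : OrthogonalIdempotents e) {z : 𝕜} (hz : z ≠ 0)
    (c : ι → 𝕜) (hc : ∀ j, z + c j ≠ 0) : IsUnit (algebraMap 𝕜 R z + ∑ j, c j • e j) := by
  -- `z⁻¹ + d j` is the inverse of `z + c j`
  set d : ι → 𝕜 := fun j => -c j / (z * (z + c j))
  have hd : ∀ j, z * d j + c j * z⁻¹ + c j * d j = 0 := fun j => by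
    have := hc j
    simp only [d]
    field_simp
    ring
  refine ⟨⟨_, algebraMap 𝕜 R z⁻¹ + ∑ j, d j • e j, ?_, ?_⟩, rfl⟩ <;>
    simp only [he.algebraMap_add_sum_smul_mul, mul_inv_cancel₀ hz, inv_mul_cancel₀ hz, map_one]
  · simp [hd]
  · simp [fun j => show z⁻¹ * c j + d j * z + d j * c j = 0 by linear_combination hd j]

lemma spectrum_sum_smul_subset (he : OrthogonalIdempotents e) (c : ι → 𝕜) :
    spectrum 𝕜 (∑ j, c j • e j) ⊆ insert 0 (Set.range c) := by
  intro z hz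
  by_contra hzc
  simp only [Set.mem_insert_iff, Set.mem_range, not_or, not_exists] at hzc
  refine spectrum.mem_iff.mp hz ?_
  rw [sub_eq_add_neg, ← Finset.sum_neg_distrib]
  simp_rw [← neg_smul]
  exact he.isUnit_algebraMap_add_sum_smul hzc.1 _ fun j => by
    rw [← sub_eq_add_neg, sub_ne_zero]; exact fun h => hzc.2 j h.symm

end OrthogonalIdempotents

lemma mem_spectrum_of_mul_eq_smul {𝕜 R : Type*} [CommSemiring 𝕜] [Ring R] [Algebra 𝕜 R]
    {x a : R} {z : 𝕜} (hx : x ≠ 0) (h : x * a = z • x) : z ∈ spectrum 𝕜 a := by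
  intro hu
  refine hx (hu.mul_left_eq_zero.mp ?_)
  rw [mul_sub, h, ← Algebra.commutes, ← Algebra.smul_def, sub_self]

lemma IsIdempotentElem.eq_zero_of_mem_jacobson_bot {R : Type*} [Ring R] {e : R}
    (he : IsIdempotentElem e) (h : e ∈ (⊥ : Ideal R).jacobson) : e = 0 := by
  obtain ⟨z, hz⟩ := Ideal.mem_jacobson_iff.mp h (-1)
  have hz : z * (1 - e) = 1 := by
    rw [Ideal.mem_bot] at hz
    rw [← sub_eq_zero, ← hz]
    noncomm_ring
  calc e = z * (1 - e) * e := by rw [hz, one_mul]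
    _ = 0 := by rw [mul_assoc, sub_mul, one_mul, he.eq, sub_self, mul_zero]

section SpectralDecomposition

variable {A : Type*} [NonUnitalRing A] [Module ℂ A] [SMulCommClass ℂ A A] [IsScalarTower ℂ A A]
  [Star A]

lemma HasSpectralDecomposition.exists_unitization_sum_smul {b : A}
    (hb : HasSpectralDecomposition b) :
    ∃ (n : ℕ) (lam : Fin n → ℝ) (e : Fin n → Unitization ℂ A), OrthogonalIdempotents e ∧
      (∀ j, lam j ≠ 0) ∧ (∀ j, e j ≠ 0) ∧ (b : Unitization ℂ A) = ∑ j, (lam j : ℂ) • e j := by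
  obtain ⟨n, lam, e, -, hlam, he0, hproj, horth, rfl⟩ := hb
  refine ⟨n, lam, fun j => e j, ⟨fun j => ?_, fun j k hjk => ?_⟩, hlam,
    fun j => Unitization.inr_injective.ne (he0 j), ?_⟩
  · rw [IsIdempotentElem, ← Unitization.inr_mul, (hproj j).2]
  · show (e j : Unitization ℂ A) * e k = 0
    rw [← Unitization.inr_mul, horth j k hjk, Unitization.inr_zero]
  · simp only [← Unitization.inr_smul]
    exact map_sum (Unitization.inrNonUnitalAlgHom ℂ A) _ _

lemma HasSpectralDecomposition.exists_mul_eq_smul {b : A}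
    (hb : HasSpectralDecomposition b) (hb0 : b ≠ 0) :
    ∃ (r : ℝ) (e : Unitization ℂ A), r ≠ 0 ∧ e ≠ 0 ∧ IsIdempotentElem e ∧
      e * b = (r : ℂ) • e := by
  obtain ⟨n, lam, e, he, hlam, he0, hb⟩ := hb.exists_unitization_sum_smul
  obtain ⟨j⟩ : Nonempty (Fin n) := by
    rw [← not_isEmpty_iff]
    intro
    exact hb0 (Unitization.inr_injective (by
      rw [hb, Finset.univ_eq_empty, Finset.sum_empty, Unitization.inr_zero]))
  exact ⟨lam j, e j, hlam j, he0 j, he.idem j, by rw [hb, he.mul_sum_smul]⟩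

lemma IsSelfAdjoint.exists_sum_smul
    (hdec : ∀ b : A, star b = b → b ≠ 0 → HasSpectralDecomposition b) {b : A}
    (hb : IsSelfAdjoint b) :
    ∃ (n : ℕ) (lam : Fin n → ℝ) (e : Fin n → Unitization ℂ A), OrthogonalIdempotents e ∧
      (b : Unitization ℂ A) = ∑ j, (lam j : ℂ) • e j := by
  by_cases hb0 : b = 0
  · exact ⟨0, Fin.elim0, Fin.elim0, ⟨fun j => j.elim0, fun j => j.elim0⟩, by simp [hb0]⟩
  · obtain ⟨n, lam, e, he, -, -, hb⟩ := (hdec b hb hb0).exists_unitization_sum_smul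
    exact ⟨n, lam, e, he, hb⟩

lemma isHermitianStarAlgebra_of_hasSpectralDecomposition
    (hdec : ∀ b : A, star b = b → b ≠ 0 → HasSpectralDecomposition b) :
    IsHermitianStarAlgebra A := by
  intro b (hb : IsSelfAdjoint b) z hz
  obtain ⟨n, lam, e, he, hb⟩ := hb.exists_sum_smul hdec
  rw [hb] at hz
  obtain rfl | ⟨j, rfl⟩ := he.spectrum_sum_smul_subset _ hz
  · rfl
  · exact Complex.ofReal_im _

lemma IsSelfAdjoint.re_nonneg_of_mem_spectrum_mul_self
    (hdec : ∀ b : A, star b = b → b ≠ 0 → HasSpectralDecomposition b)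
    {k : A} (hk : IsSelfAdjoint k) {z : ℂ} (hz : z ∈ spectrum ℂ ((k * k : A) : Unitization ℂ A)) :
    0 ≤ z.re := by
  obtain ⟨n, lam, e, he, hk⟩ := hk.exists_sum_smul hdec
  rw [Unitization.inr_mul, hk, he.sum_smul_mul_sum_smul] at hz
  obtain rfl | ⟨j, rfl⟩ := he.spectrum_sum_smul_subset _ hz
  · rfl
  · simpa using mul_self_nonneg (lam j)

lemma IsSelfAdjoint.eq_zero_of_mul_self_eq_zero
    (hdec : ∀ b : A, star b = b → b ≠ 0 → HasSpectralDecomposition b)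
    {b : A} (hb : IsSelfAdjoint b) (hbb : b * b = 0) : b = 0 := by
  by_contra hb0
  obtain ⟨r, e, hr, he0, -, heb⟩ := (hdec b hb hb0).exists_mul_eq_smul hb0
  have : ((r : ℂ) * r) • e = 0 := by
    rw [← smul_smul, ← heb, ← smul_mul_assoc, ← heb, mul_assoc, ← Unitization.inr_mul, hbb,
      Unitization.inr_zero, mul_zero]
  simp [hr, he0] at this

end SpectralDecomposition

section StarRing

variable {A : Type*} [NonUnitalRing A] [Module ℂ A] [SMulCommClass ℂ A A] [IsScalarTower ℂ A A]
  [StarRing A] [StarModule ℂ A]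

lemma eq_zero_of_star_mul_self_eq_zero
    (hdec : ∀ b : A, star b = b → b ≠ 0 → HasSpectralDecomposition b)
    {a : A} (ha : star a * a = 0) : a = 0 := by
  have ha' : a * star a = 0 := (IsSelfAdjoint.mul_star_self a).eq_zero_of_mul_self_eq_zero hdec
    (by rw [mul_assoc, ← mul_assoc (star a), ha, zero_mul, mul_zero])
  set h := a + star a
  set k := Complex.I • (a - star a)
  have hh : IsSelfAdjoint h := by simp [h, IsSelfAdjoint, add_comm]
  have hk : IsSelfAdjoint k := by
    simp only [k, IsSelfAdjoint, star_smul, star_sub, star_star, Complex.star_def, Complex.conj_I,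
      neg_smul, ← smul_neg, neg_sub]
  have hkk : k * k = -(h * h) := by
    have : (a - star a) * (a - star a) = h * h - 2 • (a * star a + star a * a) := by
      simp only [h]
      noncomm_ring
    rw [smul_mul_smul_comm, Complex.I_mul_I, neg_one_smul, this, ha, ha', add_zero, smul_zero,
      sub_zero]
  have hh0 : h = 0 := by
    by_contra h0
    obtain ⟨r, e, hr, he0, -, heh⟩ := (hdec h hh h0).exists_mul_eq_smul h0
    have hekk : e * (k * k : A) = ((-(r * r) : ℝ) : ℂ) • e := by
      rw [hkk, Unitization.inr_neg, Unitization.inr_mul, mul_neg, ← mul_assoc, heh,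
        smul_mul_assoc, heh, smul_smul]
      push_cast
      rw [neg_smul]
    have := hk.re_nonneg_of_mem_spectrum_mul_self hdec (mem_spectrum_of_mul_eq_smul he0 hekk)
    rw [Complex.ofReal_re, neg_nonneg] at this
    exact hr (mul_self_eq_zero.mp (le_antisymm this (mul_self_nonneg r)))
  have hk0 : k = 0 := hk.eq_zero_of_mul_self_eq_zero hdec (by rw [hkk, hh0, mul_zero, neg_zero])
  have hsa : IsSelfAdjoint a := by
    rw [smul_eq_zero_iff_right Complex.I_ne_zero, sub_eq_zero] at hk0
    exact hk0.symm
  exact hsa.eq_zero_of_mul_self_eq_zero hdec (by rwa [hsa.star_eq] at ha)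

lemma isSemisimpleAlgebra_of_hasSpectralDecomposition
    (hdec : ∀ b : A, star b = b → b ≠ 0 → HasSpectralDecomposition b) :
    IsSemisimpleAlgebra A := by
  intro a ha
  refine eq_zero_of_star_mul_self_eq_zero hdec (by_contra fun hne => ?_)
  obtain ⟨r, e, hr, he0, he, hmul⟩ :=
    (hdec _ (IsSelfAdjoint.star_mul_self a) hne).exists_mul_eq_smul hne
  have hrad : e ∈ (⊥ : Ideal (Unitization ℂ A)).jacobson := by
    have : e = ((r : ℂ)⁻¹ • e) * (star a * a : A) := by
      rw [smul_mul_assoc, hmul, smul_smul, inv_mul_cancel₀ (by exact_mod_cast hr), one_smul]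
    rw [this, Unitization.inr_mul, ← mul_assoc]
    exact Ideal.mul_mem_left _ _ ha
  exact he0 (he.eq_zero_of_mem_jacobson_bot hrad)

end StarRing

theorem hermitian_and_semisimple_of_spectralDecomposition_general (A : Type*) [NonUnitalRing A]
    [Module ℂ A] [SMulCommClass ℂ A A] [IsScalarTower ℂ A A] [StarRing A] [StarModule ℂ A]
    (hdec : ∀ b : A, star b = b → b ≠ 0 → HasSpectralDecomposition b) :
    IsHermitianStarAlgebra A ∧ IsSemisimpleAlgebra A :=
  ⟨isHermitianStarAlgebra_of_hasSpectralDecomposition hdec,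
    isSemisimpleAlgebra_of_hasSpectralDecomposition hdec⟩

/-- If in an algebraic complex `*`-algebra every nonzero selfadjoint
element is a finite linear combination of nonzero pairwise orthogonal projections with
distinct nonzero real coefficients, then the algebra is hermitian and semisimple. -/
theorem hermitian_and_semisimple_of_spectralDecomposition (A : Type*) [NonUnitalRing A]
    [Module ℂ A] [SMulCommClass ℂ A A] [IsScalarTower ℂ A A] [StarRing A] [StarModule ℂ A]
    (halg : IsAlgebraicAlgebra A)
    (hdec : ∀ b : A, star b = b → b ≠ 0 → HasSpectralDecomposition b) :
    IsHermitianStarAlgebra A ∧ IsSemisimpleAlgebra A :=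
  hermitian_and_semisimple_of_spectralDecomposition_general A hdec
end

section
/- Let 𝒜 be a commutative unital C*-algebra and let B ⊆ 𝒜 be a dense unital *-subalgebra (containing the unit of 𝒜) which, as a *-algebra, is algebraic and a Baer *-algebra. Then 𝒜 is a Baer *-algebra (i.e., a commutative AW*-algebra), and every projection of 𝒜 belongs to B. -/
/-!
Through the Gelfand transform, `𝒜 = C(X, ℂ)` with `X` compact Hausdorff. An algebraic element
of `C(X, ℂ)` takes finitely many values, so by Lagrange interpolation the indicator of any set
of its values is a polynomial in it. Approximating a continuous `f` by an element of `B` and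
thresholding its values therefore gives an element of `B` agreeing with `f` wherever `f` is `0`
or `1`. Hence every idempotent of `C(X, ℂ)` lies in `B`, and Urysohn functions can be replaced
by idempotents of `B`. With these, if the projection `g ∈ B` generates the annihilator in `B` of
`{t ∈ B | S t = 0}`, then `1 - g` generates the right annihilator of `S` in `C(X, ℂ)`.
-/

/-- A Baer `*`-ring: the right annihilator of every nonempty subset is the principal
right ideal generated by a projection. -/
def IsBaerStarRing (A : Type*) [Mul A] [Zero A] [Star A] : Prop :=
  ∀ S : Set A, S.Nonempty → ∃ f : A, star f = f ∧ f * f = f ∧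
    {y : A | ∀ s ∈ S, s * y = 0} = {z : A | ∃ x : A, z = f * x}

open Polynomial

theorem IsBaerStarRing.of_starMulEquiv {A B : Type*} [MulZeroClass A] [Star A] [MulZeroClass B]
    [Star B] (e : A ≃⋆* B) (h : IsBaerStarRing A) : IsBaerStarRing B := by
  rintro S ⟨s₀, hs₀⟩
  obtain ⟨f, hf_star, hf_idem, hf_ann⟩ := h (e ⁻¹' S) ⟨e.symm s₀, by simpa using hs₀⟩
  refine ⟨e f, by rw [← map_star, hf_star], by rw [← map_mul, hf_idem], ?_⟩
  ext y
  obtain ⟨a, rfl⟩ := EquivLike.surjective e y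
  calc (∀ s ∈ S, s * e a = 0) ↔ ∀ s ∈ e ⁻¹' S, s * a = 0 :=
        (EquivLike.surjective e).forall.trans <| forall_congr' fun s ↦ by
          rw [Set.mem_preimage, ← map_mul, map_eq_zero_iff e (EquivLike.injective e)]
    _ ↔ ∃ x, a = f * x := Set.ext_iff.mp hf_ann a
    _ ↔ ∃ x, e a = e f * x :=
        Iff.symm <| (EquivLike.surjective e).exists.trans <| exists_congr fun x ↦ by
          rw [← map_mul, (EquivLike.injective e).eq_iff]

namespace ContinuousMap

variable {X 𝕜 : Type*} [TopologicalSpace X]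

section Field

variable [Field 𝕜] [TopologicalSpace 𝕜] [IsTopologicalRing 𝕜]

theorem aeval_apply (f : C(X, 𝕜)) (q : 𝕜[X]) (x : X) : aeval f q x = aeval (f x) q :=
  (aeval_algHom_apply (evalAlgHom 𝕜 𝕜 x) f q).symm

theorem finite_range_of_isAlgebraic {f : C(X, 𝕜)} (hf : IsAlgebraic 𝕜 f) :
    (Set.range f).Finite := by
  obtain ⟨q, hq0, hq⟩ := hf
  refine (q.rootSet_finite 𝕜).subset ?_
  rintro _ ⟨x, rfl⟩
  exact mem_rootSet.mpr ⟨hq0, by rw [← aeval_apply, hq, zero_apply]⟩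

theorem exists_aeval_apply_eq_ite {f : C(X, 𝕜)} (hf : (Set.range f).Finite) (P : 𝕜 → Prop)
    [DecidablePred P] : ∃ q : 𝕜[X], ∀ x, aeval f q x = if P (f x) then 1 else 0 := by
  classical
  refine ⟨Lagrange.interpolate hf.toFinset id fun c ↦ if P c then 1 else 0, fun x ↦ ?_⟩
  rw [aeval_apply, aeval_def, Algebra.algebraMap_self, eval₂_id]
  exact Lagrange.eval_interpolate_at_node _ (Set.injOn_id _) (hf.mem_toFinset.mpr ⟨x, rfl⟩)

end Field

variable {R : Type*} [Ring R]

section NormedField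

variable [NormedField 𝕜] [CompactSpace X] [Algebra 𝕜 R] [Algebra.IsAlgebraic 𝕜 R]
  {F : Type*} [FunLike F R C(X, 𝕜)] [AlgHomClass F 𝕜 R C(X, 𝕜)] {ι : F}

theorem exists_eqOn_preimage_zero_one_of_denseRange (hι : DenseRange ι) (f : C(X, 𝕜)) :
    ∃ r, Set.EqOn (ι r) f (f ⁻¹' {0, 1}) := by
  classical
  obtain ⟨r₀, hr₀⟩ := hι.exists_dist_lt f one_half_pos
  have hr₀_alg : IsAlgebraic 𝕜 (ι r₀) :=
    (Algebra.IsAlgebraic.isAlgebraic r₀).algHom (AlgHomClass.toAlgHom ι)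
  obtain ⟨q, hq⟩ :=
    exists_aeval_apply_eq_ite (finite_range_of_isAlgebraic hr₀_alg) (fun c ↦ dist c 1 < 1 / 2)
  have hclose (x : X) : dist (ι r₀ x) (f x) < 1 / 2 :=
    (dist_comm (f x) _ ▸ dist_apply_le_dist x).trans_lt hr₀
  refine ⟨aeval r₀ q, fun x hx ↦ ?_⟩
  rw [← aeval_algHom_apply, hq]
  rcases hx with hx | hx
  · have : 1 / 2 < dist (ι r₀ x) 1 := by
      have := dist_triangle_left (0 : 𝕜) 1 (ι r₀ x)
      rw [dist_zero_left, norm_one, ← hx] at this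
      linarith [hclose x]
    rw [if_neg this.not_gt, hx]
  · rw [if_pos (hx ▸ hclose x), Set.mem_singleton_iff.mp hx]

theorem mem_range_of_isIdempotentElem (hι : DenseRange ι) {p : C(X, 𝕜)}
    (hp : IsIdempotentElem p) : p ∈ Set.range ι := by
  obtain ⟨r, hr⟩ := exists_eqOn_preimage_zero_one_of_denseRange hι p
  refine ⟨r, ext fun x ↦ hr ?_⟩
  exact IsIdempotentElem.iff_eq_zero_or_one.mp (hp.map (evalAlgHom 𝕜 𝕜 x))

end NormedField

section RCLike

variable [RCLike 𝕜] [CompactSpace X] [T2Space X] [Algebra 𝕜 R] [Algebra.IsAlgebraic 𝕜 R]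
  {F : Type*} [FunLike F R C(X, 𝕜)] [AlgHomClass F 𝕜 R C(X, 𝕜)] {ι : F}

theorem exists_apply_eq_one_and_eqOn_zero_of_denseRange (hι : DenseRange ι) {K : Set X}
    (hK : IsClosed K) {x : X} (hx : x ∉ K) : ∃ r, ι r x = 1 ∧ Set.EqOn (ι r) 0 K := by
  obtain ⟨h, hK0, hx1, -⟩ := exists_continuous_zero_one_of_isClosed hK isClosed_singleton
    (Set.disjoint_singleton_right.mpr hx)
  set f : C(X, 𝕜) := (⟨RCLike.ofReal, RCLike.continuous_ofReal⟩ : C(ℝ, 𝕜)).comp h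
  have hf1 : f x = 1 := by simp [f, hx1 (Set.mem_singleton x)]
  have hf0 : Set.EqOn f 0 K := fun y hy ↦ by simp [f, hK0 hy]
  obtain ⟨r, hr⟩ := exists_eqOn_preimage_zero_one_of_denseRange hι f
  exact ⟨r, (hr (by simp [hf1])).trans hf1, fun y hy ↦ (hr (by simp [hf0 hy])).trans (hf0 hy)⟩

theorem exists_apply_eq_one_and_mul_eq_zero_of_denseRange (hι : DenseRange ι) {y : C(X, 𝕜)}
    {x : X} (hx : y x ≠ 0) : ∃ r, ι r x = 1 ∧ ∀ u : C(X, 𝕜), u * y = 0 → u * ι r = 0 := by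
  obtain ⟨r, hrx, hr0⟩ := exists_apply_eq_one_and_eqOn_zero_of_denseRange hι
    (isClosed_singleton.preimage y.continuous) hx
  refine ⟨r, hrx, fun u hu ↦ ext fun z ↦ ?_⟩
  by_cases hz : y z = 0
  · simp [hr0 hz]
  · have huz := congr($hu z)
    simp only [mul_apply, zero_apply, mul_eq_zero, hz, or_false] at huz
    simp [huz]

end RCLike

theorem isBaerStarRing_of_denseRange [RCLike 𝕜] [CompactSpace X] [T2Space X] [Algebra 𝕜 R]
    [Star R] [Algebra.IsAlgebraic 𝕜 R] (ι : R →⋆ₐ[𝕜] C(X, 𝕜)) (hι_inj : Function.Injective ι)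
    (hι : DenseRange ι) (hbaer : IsBaerStarRing R) : IsBaerStarRing C(X, 𝕜) := by
  intro S _
  obtain ⟨g, hg_star, hg_idem, hg_ann⟩ := hbaer {t | ∀ s ∈ S, s * ι t = 0} ⟨0, by simp⟩
  have hg_idem' : IsIdempotentElem (ι g) := IsIdempotentElem.map hg_idem ι
  have mem_ann {r : R} : (∀ t : R, (∀ s ∈ S, s * ι t = 0) → t * r = 0) ↔ ∃ x, r = g * x :=
    Set.ext_iff.mp hg_ann r
  have hS_mul_one_sub : ∀ s ∈ S, s * (1 - ι g) = 0 := by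
    intro s hs
    ext x
    by_cases hx : s x = 0
    · simp [hx]
    -- the bump `ι r` at `x` vanishes off `{s ≠ 0}`, so `r` annihilates `{t | S * ι t = 0}`,
    -- hence is a multiple of `g`, forcing `g x = 1`
    obtain ⟨r, hrx, hr⟩ := exists_apply_eq_one_and_mul_eq_zero_of_denseRange hι hx
    obtain ⟨c, rfl⟩ := (mem_ann (r := r)).mp fun t ht ↦ hι_inj <| by
      rw [map_mul, map_zero]
      exact hr _ (mul_comm (ι t) s ▸ ht s hs)
    have hgc : ι (g * c) * (1 - ι g) = 0 := by
      rw [map_mul, mul_right_comm, hg_idem'.mul_one_sub_self, zero_mul]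
    have hgx := congr($hgc x)
    simp only [mul_apply, zero_apply, hrx, one_mul] at hgx
    simp [hgx]
  have hg_mul : ∀ y : C(X, 𝕜), (∀ s ∈ S, s * y = 0) → ι g * y = 0 := by
    intro y hy
    ext x
    by_cases hx : y x = 0
    · simp [hx]
    -- the bump `ι r` at `x` vanishes off `{y ≠ 0}`, so `S * ι r = 0`, hence `r * g = 0`,
    -- forcing `g x = 0`
    obtain ⟨r, hrx, hr⟩ := exists_apply_eq_one_and_mul_eq_zero_of_denseRange hι hx
    have hrg : r * g = 0 := mem_ann.mpr ⟨g, hg_idem.symm⟩ r fun s hs ↦ hr s (hy s hs)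
    have hgx := congr($(congrArg ι hrg) x)
    simp only [map_mul, map_zero, mul_apply, zero_apply, hrx, one_mul] at hgx
    simp [hgx]
  refine ⟨1 - ι g, by rw [star_sub, star_one, ← map_star, hg_star], hg_idem'.one_sub, ?_⟩
  ext y
  refine ⟨fun hy ↦ ⟨y, by rw [sub_mul, one_mul, hg_mul y hy, sub_zero]⟩, ?_⟩
  rintro ⟨x, rfl⟩ s hs
  rw [← mul_assoc, hS_mul_one_sub s hs, zero_mul]

end ContinuousMap

/-- Let `𝒜` be a commutative unital C*-algebra and `B ⊆ 𝒜` a dense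
unital `*`-subalgebra which is algebraic and a Baer `*`-algebra. Then `𝒜` is a Baer
`*`-algebra (a commutative AW*-algebra) and every projection of `𝒜` lies in `B`. -/
theorem baer_and_projections_mem_of_dense_algebraic_baer_starSubalgebra
    (𝒜 : Type*) [NormedCommRing 𝒜] [StarRing 𝒜] [CStarRing 𝒜] [NormedAlgebra ℂ 𝒜]
    [CompleteSpace 𝒜] [StarModule ℂ 𝒜]
    (B : StarSubalgebra ℂ 𝒜) (hdense : Dense (B : Set 𝒜))
    (halg : ∀ b : B, IsAlgebraic ℂ b) (hbaer : IsBaerStarRing B) :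
    IsBaerStarRing 𝒜 ∧ ∀ p : 𝒜, star p = p → p * p = p → p ∈ B := by
  let _ : CommCStarAlgebra 𝒜 := { }
  have : Algebra.IsAlgebraic ℂ B := ⟨halg⟩
  let Φ := gelfandStarTransform 𝒜
  let ι := (Φ : 𝒜 →⋆ₐ[ℂ] C(WeakDual.characterSpace ℂ 𝒜, ℂ)).comp B.subtype
  have hι : DenseRange ι := Φ.surjective.denseRange.comp hdense.denseRange_val
    (gelfandTransform_isometry 𝒜).continuous
  refine ⟨.of_starMulEquiv (.ofClass Φ.symm) (ContinuousMap.isBaerStarRing_of_denseRange ι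
    (Φ.injective.comp Subtype.val_injective) hι hbaer), fun p _ hp ↦ ?_⟩
  obtain ⟨b, hb⟩ := ContinuousMap.mem_range_of_isIdempotentElem hι (IsIdempotentElem.map hp Φ)
  exact Φ.injective hb ▸ b.2
end

section
/- Let G be a locally finite group (every finitely generated subgroup of G is finite). Then the complex group algebra ℂ[G] is a Baer ring if and only if G is finite. -/
/-- A Baer ring: the right annihilator of every nonempty subset is the principal right
ideal generated by an idempotent. -/
def IsBaerRing (A : Type*) [Mul A] [Zero A] : Prop :=
  ∀ S : Set A, S.Nonempty → ∃ e : A, e * e = e ∧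
    {y : A | ∀ s ∈ S, s * y = 0} = {z : A | ∃ x : A, z = e * x}

/-!
If `G` is finite, `ℂ[G]` is semisimple (Maschke), so every right ideal, in particular every right
annihilator, is generated by an idempotent.

If `G` is infinite and locally finite, it is not finitely generated, hence contains a strictly
increasing chain `K₀ < K₁ < ⋯` of finite subgroups. The averaging idempotents `Eₙ` of the `Kₙ`
satisfy `Eₘ Eₙ = E_{max m n}`, so the elements `pₙ = Eₙ - Eₙ₊₁` are pairwise orthogonal. If the
right annihilator of `{p₀, p₂, p₄, …}` were `e ℂ[G]`, then `p_{2j} e = 0` and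
`e p_{2j+1} = p_{2j+1}` for all `j`. Write `τ` for the coefficient at `1` and `σ` for the sum of
the coefficients of `e` on `⋃ Kₙ`. Since `e` has finite support, `τ (pₙ e) = τ (e pₙ) = τ pₙ · σ`
for all large `n`, while `τ pₙ = |Kₙ|⁻¹ - |Kₙ₊₁|⁻¹ ≠ 0`. The first relation gives `σ = 0`, and
then the second gives `τ p_{2j+1} = 0`, a contradiction.
-/

open MonoidAlgebra Filter

theorem IsSemisimpleRing.isBaerRing {A : Type*} [Ring A] [IsSemisimpleRing A] : IsBaerRing A := by
  intro S _
  let J : Ideal Aᵐᵒᵖ :=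
    { carrier := {y | ∀ s ∈ S, s * y.unop = 0}
      add_mem' := fun ha hb s hs => by simp [mul_add, ha s hs, hb s hs]
      zero_mem' := fun s _ => by simp
      smul_mem' := fun c y hy s hs => by simp [← mul_assoc, hy s hs] }
  obtain ⟨e, he, hJ⟩ := IsSemisimpleRing.ideal_eq_span_idempotent J
  refine ⟨e.unop, congrArg MulOpposite.unop he, Set.ext fun y => ?_⟩
  refine (SetLike.ext_iff.mp hJ (.op y)).trans ?_
  simp only [Ideal.mem_span_singleton', MulOpposite.exists, Set.mem_ofPred_eq]
  refine exists_congr fun a => ?_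
  rw [← MulOpposite.op_unop e, ← MulOpposite.op_mul, MulOpposite.op_inj, MulOpposite.unop_op,
    eq_comm]

theorem Subgroup.exists_fg_gt_of_not_fg {G : Type*} [Group G] (hG : ¬ Group.FG G)
    {H : Subgroup G} (hH : H.FG) : ∃ H' : Subgroup G, H'.FG ∧ H < H' := by
  obtain ⟨g, hg⟩ : ∃ g, g ∉ H := by
    by_contra! hall
    exact hG (Group.fg_def.mpr ((Subgroup.eq_top_iff' H).mpr hall ▸ hH))
  have hzpowers : (Subgroup.zpowers g).FG := ⟨{g}, by simp [Subgroup.zpowers_eq_closure]⟩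
  exact ⟨H ⊔ Subgroup.zpowers g, hH.sup hzpowers, lt_of_le_of_ne le_sup_left fun h =>
    hg (h ▸ Subgroup.mem_sup_right (Subgroup.mem_zpowers g))⟩

theorem Group.exists_strictMono_fg_of_not_fg {G : Type*} [Group G] (hG : ¬ Group.FG G) :
    ∃ K : ℕ → Subgroup G, StrictMono K ∧ ∀ n, (K n).FG := by
  choose next hnext using fun H : {H : Subgroup G // H.FG} =>
    Subgroup.exists_fg_gt_of_not_fg hG H.2
  let K : ℕ → {H : Subgroup G // H.FG} :=
    fun n => Nat.rec ⟨⊥, .bot⟩ (fun _ H => ⟨next H, (hnext H).1⟩) n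
  exact ⟨fun n => (K n).1, strictMono_nat_of_lt_succ fun n => (hnext (K n)).2, fun n => (K n).2⟩

theorem Subgroup.card_lt_card_of_lt {G : Type*} [Group G] {H K : Subgroup G} [Fintype H]
    [Fintype K] (h : K < H) : Fintype.card K < Fintype.card H := by
  obtain ⟨g, hgH, hgK⟩ := SetLike.exists_of_lt h
  refine Fintype.card_lt_of_injective_of_notMem _ (Subgroup.inclusion_injective h.le)
    (b := ⟨g, hgH⟩) ?_
  rintro ⟨x, hx⟩
  have hxg : (x : G) = g := congrArg Subtype.val hx
  exact hgK (hxg ▸ x.2)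

theorem Subgroup.sum_inv_eq_finsum_mem {G M : Type*} [Group G] [AddCommMonoid M]
    (H : Subgroup G) [Fintype H] (f : G → M) : ∑ h : H, f (h : G)⁻¹ = ∑ᶠ g ∈ H, f g := by
  rw [Fintype.sum_equiv (Equiv.inv H) (fun h => f (h : G)⁻¹) (fun h => f h) fun _ => rfl,
    ← finsum_eq_sum_of_fintype]
  exact finsum_set_coe_eq_finsum_mem (H : Set G)

theorem Set.eventually_inter_eq_iUnion_inter {α : Type*} {s : ℕ → Set α} (hs : Monotone s)
    {t : Set α} (ht : t.Finite) : ∀ᶠ n in atTop, s n ∩ t = (⋃ m, s m) ∩ t := by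
  have hmem : ∀ x ∈ t, ∀ᶠ n in atTop, (x ∈ s n ↔ x ∈ ⋃ m, s m) := by
    intro x _
    by_cases hx : x ∈ ⋃ m, s m
    · obtain ⟨m, hm⟩ := Set.mem_iUnion.mp hx
      filter_upwards [eventually_ge_atTop m] with n hn
      exact iff_of_true (hs hn hm) hx
    · exact .of_forall fun n => iff_of_false (fun h => hx (Set.mem_iUnion_of_mem n h)) hx
  filter_upwards [(eventually_all_finite ht).mpr hmem] with n hn
  ext x
  exact and_congr_left (hn x)

theorem eventually_finsum_mem_eq_finsum_mem_iUnion {α M : Type*} [AddCommMonoid M] {f : α → M}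
    (hf : (Function.support f).Finite) {s : ℕ → Set α} (hs : Monotone s) :
    ∀ᶠ n in atTop, ∑ᶠ x ∈ s n, f x = ∑ᶠ x ∈ ⋃ m, s m, f x := by
  filter_upwards [Set.eventually_inter_eq_iUnion_inter hs hf] with n hn
  rw [← finsum_mem_inter_support, hn, finsum_mem_inter_support]

namespace Subgroup

variable {k G : Type*} [Field k] [Group G]

variable (k) in
noncomputable def average (H : Subgroup G) [Fintype H] : MonoidAlgebra k G :=
  (Fintype.card H : k)⁻¹ • ∑ h : H, single (h : G) 1

variable {H K : Subgroup G} [Fintype H] [Fintype K]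

theorem single_mul_average {g : G} (hg : g ∈ H) : single g 1 * H.average k = H.average k := by
  simp only [average, mul_smul_comm, Finset.mul_sum, single_mul_single, one_mul]
  congr 1
  exact Fintype.sum_equiv (Equiv.mulLeft ⟨g, hg⟩) _ _ fun _ => rfl

theorem average_mul_single {g : G} (hg : g ∈ H) : H.average k * single g 1 = H.average k := by
  simp only [average, smul_mul_assoc, Finset.sum_mul, single_mul_single, one_mul]
  congr 1
  exact Fintype.sum_equiv (Equiv.mulRight ⟨g, hg⟩) _ _ fun _ => rfl

theorem average_mul_average_of_le [CharZero k] (hKH : K ≤ H) :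
    K.average k * H.average k = H.average k := by
  rw [average, smul_mul_assoc, Finset.sum_mul]
  simp only [single_mul_average (hKH (SetLike.coe_mem _)), Finset.sum_const, Finset.card_univ,
    ← Nat.cast_smul_eq_nsmul k, smul_smul]
  rw [inv_mul_cancel₀ (by exact_mod_cast Fintype.card_ne_zero), one_smul]

theorem average_mul_average_of_ge [CharZero k] (hKH : K ≤ H) :
    H.average k * K.average k = H.average k := by
  rw [average.eq_1 k K, mul_smul_comm, Finset.mul_sum]
  simp only [average_mul_single (hKH (SetLike.coe_mem _)), Finset.sum_const, Finset.card_univ,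
    ← Nat.cast_smul_eq_nsmul k, smul_smul]
  rw [inv_mul_cancel₀ (by exact_mod_cast Fintype.card_ne_zero), one_smul]

theorem coeff_one_average_mul (x : MonoidAlgebra k G) :
    (H.average k * x).coeff 1 = (Fintype.card H : k)⁻¹ * ∑ᶠ g ∈ H, x.coeff g := by
  simp only [average, smul_mul_assoc, Finset.sum_mul, coeff_smul_apply, coeff_sum,
    Finset.sum_apply', coeff_single_mul_apply, one_mul, mul_one, smul_eq_mul,
    sum_inv_eq_finsum_mem]

theorem coeff_one_mul_average (x : MonoidAlgebra k G) :
    (x * H.average k).coeff 1 = (Fintype.card H : k)⁻¹ * ∑ᶠ g ∈ H, x.coeff g := by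
  simp only [average, mul_smul_comm, Finset.mul_sum, coeff_smul_apply, coeff_sum,
    Finset.sum_apply', coeff_mul_single_apply, one_mul, mul_one, smul_eq_mul,
    sum_inv_eq_finsum_mem]

theorem coeff_one_average : (H.average k).coeff 1 = (Fintype.card H : k)⁻¹ := by
  simp only [average, coeff_smul_apply, coeff_sum, Finset.sum_apply', coeff_single, smul_eq_mul]
  rw [Fintype.sum_eq_single 1 fun h hh => Finsupp.single_eq_of_ne (by simpa [eq_comm] using hh)]
  simp

end Subgroup

namespace MonoidAlgebra

variable {k G : Type*} [Field k] [Group G] {K : ℕ → Subgroup G} [∀ n, Fintype (K n)]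

theorem average_mul_average_of_monotone [CharZero k] (hK : Monotone K) (m n : ℕ) :
    (K m).average k * (K n).average k = (K (max m n)).average k := by
  rcases le_total m n with h | h
  · rw [max_eq_right h, Subgroup.average_mul_average_of_le (hK h)]
  · rw [max_eq_left h, Subgroup.average_mul_average_of_ge (hK h)]

theorem average_sub_average_mul_average_sub_average [CharZero k] (hK : Monotone K) {m n : ℕ}
    (hmn : m ≠ n) :
    ((K m).average k - (K (m + 1)).average k) * ((K n).average k - (K (n + 1)).average k) = 0 := by
  simp only [sub_mul, mul_sub, average_mul_average_of_monotone hK]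
  rcases hmn.lt_or_gt with h | h
  · rw [show max m n = max (m + 1) n by omega, show max m (n + 1) = max (m + 1) (n + 1) by omega]
    abel
  · rw [show max m (n + 1) = max m n by omega, show max (m + 1) (n + 1) = max (m + 1) n by omega]
    abel

theorem eventually_coeff_one_average_sub_average_mul (hK : Monotone K) (x : MonoidAlgebra k G) :
    ∀ᶠ n in atTop, (((K n).average k - (K (n + 1)).average k) * x).coeff 1 =
      ((K n).average k - (K (n + 1)).average k).coeff 1 * ∑ᶠ g ∈ ⋃ m, (K m : Set G), x.coeff g := by
  have h : ∀ᶠ n in atTop, ∑ᶠ g ∈ K n, x.coeff g = ∑ᶠ g ∈ ⋃ m, (K m : Set G), x.coeff g :=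
    eventually_finsum_mem_eq_finsum_mem_iUnion x.coeff.hasFiniteSupport fun _ _ h => hK h
  filter_upwards [h, (tendsto_add_atTop_nat 1).eventually h] with n hn hn'
  rw [sub_mul, coeff_sub, coeff_sub, Finsupp.sub_apply, Finsupp.sub_apply,
    Subgroup.coeff_one_average_mul, Subgroup.coeff_one_average_mul, Subgroup.coeff_one_average,
    Subgroup.coeff_one_average, hn, hn', sub_mul]

theorem eventually_coeff_one_mul_average_sub_average (hK : Monotone K) (x : MonoidAlgebra k G) :
    ∀ᶠ n in atTop, (x * ((K n).average k - (K (n + 1)).average k)).coeff 1 =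
      ((K n).average k - (K (n + 1)).average k).coeff 1 * ∑ᶠ g ∈ ⋃ m, (K m : Set G), x.coeff g := by
  have h : ∀ᶠ n in atTop, ∑ᶠ g ∈ K n, x.coeff g = ∑ᶠ g ∈ ⋃ m, (K m : Set G), x.coeff g :=
    eventually_finsum_mem_eq_finsum_mem_iUnion x.coeff.hasFiniteSupport fun _ _ h => hK h
  filter_upwards [h, (tendsto_add_atTop_nat 1).eventually h] with n hn hn'
  rw [mul_sub, coeff_sub, coeff_sub, Finsupp.sub_apply, Finsupp.sub_apply,
    Subgroup.coeff_one_mul_average, Subgroup.coeff_one_mul_average, Subgroup.coeff_one_average,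
    Subgroup.coeff_one_average, hn, hn', sub_mul]

theorem coeff_one_average_sub_average_ne_zero [CharZero k] (hK : StrictMono K) (n : ℕ) :
    ((K n).average k - (K (n + 1)).average k).coeff 1 ≠ 0 := by
  rw [coeff_sub, Finsupp.sub_apply, Subgroup.coeff_one_average, Subgroup.coeff_one_average,
    sub_ne_zero, ne_eq, inv_inj, Nat.cast_inj]
  exact (Subgroup.card_lt_card_of_lt (hK n.lt_succ_self)).ne

theorem not_isBaerRing_of_strictMono [CharZero k] (hK : StrictMono K) :
    ¬ IsBaerRing (MonoidAlgebra k G) := by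
  intro hBaer
  set p : ℕ → MonoidAlgebra k G := fun n => (K n).average k - (K (n + 1)).average k
  obtain ⟨e, he, hann⟩ := hBaer (Set.range fun j => p (2 * j)) (Set.range_nonempty _)
  have hmem (y : MonoidAlgebra k G) :
      (∀ s ∈ Set.range fun j => p (2 * j), s * y = 0) ↔ ∃ x, y = e * x :=
    Set.ext_iff.mp hann y
  have hpe (j : ℕ) : p (2 * j) * e = 0 := (hmem e).mpr ⟨1, (mul_one e).symm⟩ _ ⟨j, rfl⟩
  have hep (j : ℕ) : e * p (2 * j + 1) = p (2 * j + 1) := by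
    obtain ⟨x, hx⟩ := (hmem (p (2 * j + 1))).mp <| by
      rintro _ ⟨i, rfl⟩
      exact average_sub_average_mul_average_sub_average (k := k) hK.monotone (by omega)
    rw [hx, ← mul_assoc, he]
  obtain ⟨N, hN⟩ := ((eventually_coeff_one_average_sub_average_mul hK.monotone e).and
    (eventually_coeff_one_mul_average_sub_average hK.monotone e)).exists_forall_of_atTop
  have hσ : ∑ᶠ g ∈ ⋃ m, (K m : Set G), e.coeff g = 0 := by
    have h := (hN (2 * N) (by omega)).1
    rw [hpe N, coeff_zero, Finsupp.zero_apply] at h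
    exact (mul_eq_zero.mp h.symm).resolve_left (coeff_one_average_sub_average_ne_zero hK _)
  refine coeff_one_average_sub_average_ne_zero (k := k) hK (2 * N + 1) ?_
  have h := (hN (2 * N + 1) (by omega)).2
  rwa [hep N, hσ, mul_zero] at h

end MonoidAlgebra

/-- For a locally finite group `G` (every finitely generated subgroup
is finite), the complex group algebra `ℂ[G]` is a Baer ring iff `G` is finite. -/
theorem groupAlgebra_baerRing_iff_finite_of_locallyFinite (G : Type*) [Group G]
    (hlf : ∀ H : Subgroup G, H.FG → Finite H) :
    IsBaerRing (MonoidAlgebra ℂ G) ↔ Finite G := by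
  refine ⟨fun hBaer => ?_, fun _ => IsSemisimpleRing.isBaerRing⟩
  by_contra hinf
  have hG : ¬ Group.FG G := fun h =>
    hinf (have := hlf ⊤ (Group.fg_def.mp h); .of_equiv _ Subgroup.topEquiv.toEquiv)
  obtain ⟨K, hK, hKfg⟩ := Group.exists_strictMono_fg_of_not_fg hG
  let (n : ℕ) : Fintype (K n) := have := hlf _ (hKfg n); Fintype.ofFinite _
  exact MonoidAlgebra.not_isBaerRing_of_strictMono hK hBaer
end
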